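/- arXiv:1111.2259 — 4 statements merged into one kernel-verified Lean document; each statement's English description precedes it below -/
import Mathlib

section
/- If F is a point inside triangle ABC such that the angles ∠AFB, ∠BFC, ∠CFA are all equal to 120°, then F minimizes the function p ↦ dist(p,A) + dist(p,B) + dist(p,C) over all points p in the plane. -/
/-!
Let `u`, `v`, `w` be the unit vectors from `F` towards `A`, `B`, `C`. Pairwise angles of `120°`
give `⟪u, v⟫ = ⟪v, w⟫ = ⟪w, u⟫ = -1/2`, hence `‖u + v + w‖² = 0`. For any `p`, the distance
`dist p X` is at least the signed distance from `p` to `X` in the direction of the unit vector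
`e` from `F` to `X`, which is `dist F X + ⟪e, F - p⟫`. Summing over `X = A, B, C`, the inner
products add up to `⟪u + v + w, F - p⟫ = 0`.
-/

open NormedSpace Real
open scoped RealInnerProductSpace

theorem Real.cos_two_pi_div_three : cos (2 * π / 3) = -(1 / 2) := by
  rw [show 2 * π / 3 = π - π / 3 by ring, cos_pi_sub, cos_pi_div_three]

namespace InnerProductGeometry

variable {V : Type*} [NormedAddCommGroup V] [InnerProductSpace ℝ V]

theorem real_inner_normalize_normalize (x y : V) :
    ⟪normalize x, normalize y⟫ = cos (angle x y) := by
  rw [cos_angle, NormedSpace.normalize, NormedSpace.normalize, real_inner_smul_left,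
    real_inner_smul_right, div_eq_inv_mul, mul_inv]
  ring

theorem normalize_add_add_eq_zero_of_angle_eq_two_pi_div_three {x y z : V}
    (hx : x ≠ 0) (hy : y ≠ 0) (hz : z ≠ 0) (hxy : angle x y = 2 * π / 3)
    (hyz : angle y z = 2 * π / 3) (hzx : angle z x = 2 * π / 3) :
    normalize x + normalize y + normalize z = 0 := by
  have self {v : V} (hv : v ≠ 0) : ⟪normalize v, normalize v⟫ = 1 := by
    rw [real_inner_self_eq_norm_sq, norm_normalize hv, one_pow]
  have cross {v w : V} (h : angle v w = 2 * π / 3) : ⟪normalize v, normalize w⟫ = -(1 / 2) := by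
    rw [real_inner_normalize_normalize, h, cos_two_pi_div_three]
  rw [← inner_self_eq_zero (𝕜 := ℝ)]
  simp only [inner_add_left, inner_add_right]
  rw [real_inner_comm (normalize x) (normalize y), real_inner_comm (normalize y) (normalize z),
    real_inner_comm (normalize z) (normalize x), self hx, self hy, self hz, cross hxy, cross hyz,
    cross hzx]
  norm_num

end InnerProductGeometry

open EuclideanGeometry

theorem EuclideanGeometry.sum_dist_le_sum_dist_of_sum_normalize_vsub_eq_zero
    {V P ι : Type*} [NormedAddCommGroup V] [InnerProductSpace ℝ V] [MetricSpace P]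
    [NormedAddTorsor V P] (s : Finset ι) (A : ι → P) {F : P}
    (hF : ∑ i ∈ s, normalize (A i -ᵥ F) = 0) (p : P) :
    ∑ i ∈ s, dist F (A i) ≤ ∑ i ∈ s, dist p (A i) := by
  have hp : ∑ i ∈ s, signedDist (A i -ᵥ F) p F = 0 := by
    simp only [signedDist_apply_apply, ← sum_inner, hF, inner_zero_left]
  calc ∑ i ∈ s, dist F (A i)
      = ∑ i ∈ s, (signedDist (A i -ᵥ F) p F + signedDist (A i -ᵥ F) F (A i)) := by
        simp only [Finset.sum_add_distrib, hp, zero_add, signedDist_vsub_self]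
    _ = ∑ i ∈ s, signedDist (A i -ᵥ F) p (A i) := by simp only [signedDist_triangle]
    _ ≤ ∑ i ∈ s, dist p (A i) := Finset.sum_le_sum fun i _ ↦ signedDist_le_dist _ _ _

theorem fermat_point_angle_characterization_min_general
    (A B C F : EuclideanSpace ℝ (Fin 2))
    (hFA : F ≠ A) (hFB : F ≠ B) (hFC : F ≠ C)
    (h1 : ∠ A F B = 2 * Real.pi / 3)
    (h2 : ∠ B F C = 2 * Real.pi / 3)
    (h3 : ∠ C F A = 2 * Real.pi / 3) :
    ∀ p : EuclideanSpace ℝ (Fin 2),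
      dist F A + dist F B + dist F C ≤ dist p A + dist p B + dist p C := by
  intro p
  have hF : ∑ i, normalize (![A, B, C] i -ᵥ F) = 0 := by
    rw [Fin.sum_univ_three]
    exact InnerProductGeometry.normalize_add_add_eq_zero_of_angle_eq_two_pi_div_three
      (vsub_ne_zero.mpr hFA.symm) (vsub_ne_zero.mpr hFB.symm) (vsub_ne_zero.mpr hFC.symm) h1 h2 h3
  have hmin := sum_dist_le_sum_dist_of_sum_normalize_vsub_eq_zero _ _ hF p
  rwa [Fin.sum_univ_three, Fin.sum_univ_three] at hmin

theorem fermat_point_angle_characterization_min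
    (A B C F : EuclideanSpace ℝ (Fin 2))
    (hncol : ¬ Collinear ℝ ({A, B, C} : Set (EuclideanSpace ℝ (Fin 2))))
    (hF : F ∈ interior (convexHull ℝ ({A, B, C} : Set (EuclideanSpace ℝ (Fin 2)))))
    (hFA : F ≠ A) (hFB : F ≠ B) (hFC : F ≠ C)
    (h1 : ∠ A F B = 2 * Real.pi / 3)
    (h2 : ∠ B F C = 2 * Real.pi / 3)
    (h3 : ∠ C F A = 2 * Real.pi / 3) :
    ∀ p : EuclideanSpace ℝ (Fin 2),
      dist F A + dist F B + dist F C ≤ dist p A + dist p B + dist p C :=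
  fermat_point_angle_characterization_min_general A B C F hFA hFB hFC h1 h2 h3
end

section
/- If triangle ABC has an angle at vertex A of measure at least 120°, then A minimizes the sum of distances p ↦ dist(p,A) + dist(p,B) + dist(p,C) over all points p in the plane. -/
/-!
Let `u` and `v` be the unit vectors from `A` towards `B` and `C`. An angle of at least `2π/3`
between them means `⟪u, v⟫ ≤ -1/2`, i.e. `‖u + v‖ ≤ 1`. Projecting onto `u` and `v` gives
`dist p B ≥ dist A B - ⟪u, p - A⟫` and `dist p C ≥ dist A C - ⟪v, p - A⟫`, while Cauchy–Schwarz
gives `dist p A ≥ ⟪u + v, p - A⟫`; the sum of the three bounds is the claim.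
-/

open InnerProductGeometry NormedSpace Real
open scoped RealInnerProductSpace

variable {V P : Type*} [NormedAddCommGroup V] [InnerProductSpace ℝ V] [MetricSpace P]
  [NormedAddTorsor V P]

theorem cos_le_neg_half_of_two_pi_div_three_le {θ : ℝ} (h : 2 * π / 3 ≤ θ) (hθ : θ ≤ π) :
    cos θ ≤ -(1 / 2) := by
  have hcos : cos (2 * π / 3) = -(1 / 2) := by
    rw [show 2 * π / 3 = π - π / 3 by ring, cos_pi_sub, cos_pi_div_three]
  exact hcos ▸ cos_le_cos_of_nonneg_of_le_pi (by positivity) hθ h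

theorem inner_normalize_normalize {x y : V} (hx : x ≠ 0) (hy : y ≠ 0) :
    ⟪normalize x, normalize y⟫ = cos (angle x y) := by
  rw [NormedSpace.normalize, NormedSpace.normalize, real_inner_smul_left, real_inner_smul_right,
    ← cos_angle_mul_norm_mul_norm]
  field_simp

theorem norm_normalize_add_normalize_le_one {x y : V} (h : 2 * π / 3 ≤ angle x y) :
    ‖normalize x + normalize y‖ ≤ 1 := by
  have hπ : angle x y ≠ π / 2 := by linarith [pi_pos]
  have hx : x ≠ 0 := by rintro rfl; exact hπ (angle_zero_left y)
  have hy : y ≠ 0 := by rintro rfl; exact hπ (angle_zero_right x)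
  have hcos := cos_le_neg_half_of_two_pi_div_three_le h (angle_le_pi x y)
  have hsq : ‖normalize x + normalize y‖ ^ 2 = 2 + 2 * cos (angle x y) := by
    rw [norm_add_sq_real, norm_normalize hx, norm_normalize hy, inner_normalize_normalize hx hy]
    ring
  exact (sq_le_one_iff₀ (norm_nonneg _)).1 (by linarith)

theorem dist_add_dist_le_of_norm_normalize_add_normalize_le_one {a b c : P}
    (h : ‖normalize (b -ᵥ a) + normalize (c -ᵥ a)‖ ≤ 1) (p : P) :
    dist a b + dist a c ≤ dist p a + dist p b + dist p c := by
  have hb : dist a b = signedDist (b -ᵥ a) a p + signedDist (b -ᵥ a) p b := by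
    rw [signedDist_triangle, signedDist_vsub_self]
  have hc : dist a c = signedDist (c -ᵥ a) a p + signedDist (c -ᵥ a) p c := by
    rw [signedDist_triangle, signedDist_vsub_self]
  have ha : signedDist (b -ᵥ a) a p + signedDist (c -ᵥ a) a p ≤ dist p a :=
    calc _ = ⟪normalize (b -ᵥ a) + normalize (c -ᵥ a), p -ᵥ a⟫ := by
          rw [signedDist_apply_apply, signedDist_apply_apply, inner_add_left]
      _ ≤ ‖normalize (b -ᵥ a) + normalize (c -ᵥ a)‖ * ‖p -ᵥ a‖ := real_inner_le_norm _ _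
      _ ≤ ‖p -ᵥ a‖ := mul_le_of_le_one_left (norm_nonneg _) h
      _ = dist p a := (dist_eq_norm_vsub V p a).symm
  linarith [signedDist_le_dist (b -ᵥ a) p b, signedDist_le_dist (c -ᵥ a) p c]

open EuclideanGeometry

theorem fermat_point_obtuse_vertex_min_general
    (A B C : EuclideanSpace ℝ (Fin 2))
    (hangle : 2 * Real.pi / 3 ≤ ∠ B A C) :
    ∀ p : EuclideanSpace ℝ (Fin 2),
      dist A A + dist A B + dist A C ≤ dist p A + dist p B + dist p C := by
  intro p
  rw [dist_self, zero_add]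
  exact dist_add_dist_le_of_norm_normalize_add_normalize_le_one
    (norm_normalize_add_normalize_le_one hangle) p

theorem fermat_point_obtuse_vertex_min
    (A B C : EuclideanSpace ℝ (Fin 2))
    (hncol : ¬ Collinear ℝ ({A, B, C} : Set (EuclideanSpace ℝ (Fin 2))))
    (hangle : 2 * Real.pi / 3 ≤ ∠ B A C) :
    ∀ p : EuclideanSpace ℝ (Fin 2),
      dist A A + dist A B + dist A C ≤ dist p A + dist p B + dist p C :=
  fermat_point_obtuse_vertex_min_general A B C hangle
end

section
/- Let A, B, C be non-collinear points with all angles of triangle ABC less than 120°, and let A' be the apex of the equilateral triangle erected externally on side BC, and similarly B' on CA and C' on AB. Then the three segments AA', BB', CC' pass through a common point. -/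
/-!
Write each apex as `midpoint + t • J (side)`, with `J` the rotation by a right angle: the
equilateral apexes have `t = ±√3 / 2`, and erecting all three externally forces the same sign,
hence the same `t`. For a common `t` the affine functions `x ↦ ω (A' - A) (x - A)`, ... cutting
out the lines `AA'`, `BB'`, `CC'` sum to zero identically (the Kiepert configuration), so the third
line passes through the intersection of the first two. These are not parallel, since
`ω (A' - A) (B' - B) = (3/4 + t²) Δ - t S / 2`, with `S` the sum of the squared sides, has the
sign of the orientation `Δ` of `ABC` when `t Δ < 0`.
-/

open EuclideanGeometry Affine

open Module RealInnerProductSpace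

namespace Orientation

variable {V : Type*} [NormedAddCommGroup V] [InnerProductSpace ℝ V] [Fact (finrank ℝ V = 2)]
  (o : Orientation ℝ V (Fin 2))

local notation "ω" => o.areaForm
local notation "J" => o.rightAngleRotation

theorem eq_inner_div_smul_add_areaForm_div_smul {a : V} (ha : a ≠ 0) (x : V) :
    x = (⟪a, x⟫ / ‖a‖ ^ 2) • a + (ω a x / ‖a‖ ^ 2) • J a := by
  refine ext_inner_right ℝ fun y => ?_
  rw [inner_add_left, real_inner_smul_left, real_inner_smul_left, inner_rightAngleRotation_left]
  field_simp
  linear_combination (o.inner_mul_inner_add_areaForm_mul_areaForm a x y).symm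

theorem areaForm_sub_eq_zero_of_mem_line {p q x : V} (hx : x ∈ line[ℝ, p, q]) :
    ω (q - p) (x - p) = 0 := by
  rw [← vsub_vadd x p, vadd_left_mem_affineSpan_pair] at hx
  obtain ⟨r, hr⟩ := hx
  rw [vsub_eq_sub, vsub_eq_sub] at hr
  rw [← hr, map_smul, areaForm_apply_self, smul_zero]

theorem mem_line_of_areaForm_sub_eq_zero {p q x : V} (hpq : p ≠ q)
    (h : ω (q - p) (x - p) = 0) : x ∈ line[ℝ, p, q] := by
  have hdecomp := o.eq_inner_div_smul_add_areaForm_div_smul (sub_ne_zero.2 hpq.symm) (x - p)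
  rw [h, zero_div, zero_smul, add_zero] at hdecomp
  rw [← vsub_vadd x p, vadd_left_mem_affineSpan_pair]
  exact ⟨_, hdecomp.symm⟩

theorem areaForm_mul_areaForm_neg_of_sOppSide {p q x y : V} (hpq : p ≠ q)
    (h : line[ℝ, p, q].SOppSide x y) : ω (q - p) (x - p) * ω (q - p) (y - p) < 0 := by
  obtain ⟨hx, hy, p', hp', hray⟩ :=
    (AffineSubspace.sOppSide_iff_exists_left (left_mem_affineSpan_pair ℝ p q)).1 h
  have hx0 : ω (q - p) (x - p) ≠ 0 := fun h0 => hx (o.mem_line_of_areaForm_sub_eq_zero hpq h0)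
  have hy0 : ω (q - p) (y - p) ≠ 0 := fun h0 => hy (o.mem_line_of_areaForm_sub_eq_zero hpq h0)
  have hp'0 := o.areaForm_sub_eq_zero_of_mem_line hp'
  obtain ⟨r, hr, hxy⟩ := (hray.map (ω (q - p))).exists_nonneg_left hx0
  have hy' : ω (q - p) (p' -ᵥ y) = -ω (q - p) (y - p) := by
    rw [vsub_eq_sub, ← sub_sub_sub_cancel_right p' y p, map_sub, hp'0, zero_sub]
  rw [vsub_eq_sub, hy', smul_eq_mul] at hxy
  have hprod : ω (q - p) (x - p) * ω (q - p) (y - p) = -(r * ω (q - p) (x - p) ^ 2) := by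
    linear_combination ω (q - p) (x - p) * hxy
  refine lt_of_le_of_ne ?_ (mul_ne_zero hx0 hy0)
  rw [hprod, neg_nonpos]
  positivity

/-- The apex of the isosceles triangle on the base `b c` whose height is `t` times the base,
erected on the left of `c - b` for `t > 0`; the equilateral ones have `t = ±√3 / 2`. -/
noncomputable def kiepertApex (t : ℝ) (b c : V) : V :=
  midpoint ℝ b c + t • J (c - b)

theorem kiepertApex_sub_left (t : ℝ) (b c : V) :
    o.kiepertApex t b c - b = (1 / 2 : ℝ) • (c - b) + t • J (c - b) := by
  rw [kiepertApex, midpoint_eq_smul_add, invOf_eq_inv]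
  module

theorem dist_left_kiepertApex_sq (t : ℝ) (b c : V) :
    dist b (o.kiepertApex t b c) ^ 2 = (1 / 4 + t ^ 2) * dist b c ^ 2 := by
  have horth : ⟪(1 / 2 : ℝ) • (c - b), t • J (c - b)⟫ = 0 := by
    rw [real_inner_smul_left, real_inner_smul_right, inner_rightAngleRotation_right,
      areaForm_apply_self, neg_zero, mul_zero, mul_zero]
  rw [dist_comm, dist_eq_norm, kiepertApex_sub_left, sq,
    norm_add_sq_eq_norm_sq_add_norm_sq_real horth, norm_smul, norm_smul,
    LinearIsometryEquiv.norm_map, dist_comm, dist_eq_norm, Real.norm_eq_abs, Real.norm_eq_abs,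
    abs_of_pos one_half_pos]
  linear_combination ‖c - b‖ ^ 2 * sq_abs t

theorem areaForm_kiepertApex_sub_left (t : ℝ) (b c : V) :
    ω (c - b) (o.kiepertApex t b c - b) = t * ‖c - b‖ ^ 2 := by
  rw [kiepertApex_sub_left, map_add, map_smul, map_smul, areaForm_apply_self,
    areaForm_rightAngleRotation_right, real_inner_self_eq_norm_sq, smul_eq_mul, smul_eq_mul]
  ring

theorem exists_eq_kiepertApex_of_dist_eq {b c z : V} (hbc : b ≠ c) (h : dist b z = dist c z) :
    ∃ t, z = o.kiepertApex t b c := by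
  have horth : ⟪c - b, z - midpoint ℝ b c⟫ = 0 := by
    rw [real_inner_comm]
    exact inner_vsub_vsub_of_dist_eq_of_dist_eq (dist_left_midpoint_eq_dist_right_midpoint b c) h
  refine ⟨ω (c - b) (z - midpoint ℝ b c) / ‖c - b‖ ^ 2, ?_⟩
  have hdecomp := o.eq_inner_div_smul_add_areaForm_div_smul (sub_ne_zero.2 hbc.symm)
    (z - midpoint ℝ b c)
  rw [horth, zero_div, zero_smul, zero_add] at hdecomp
  rw [kiepertApex, ← hdecomp, add_sub_cancel]

theorem exists_eq_kiepertApex_of_sOppSide {a b c z : V} (hbc : b ≠ c)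
    (hb : dist b z = dist b c) (hc : dist c z = dist b c) (ha : line[ℝ, b, c].SOppSide a z) :
    ∃ t, t ^ 2 = 3 / 4 ∧ t * ω (c - b) (a - b) < 0 ∧ z = o.kiepertApex t b c := by
  obtain ⟨t, rfl⟩ := o.exists_eq_kiepertApex_of_dist_eq hbc (hb.trans hc.symm)
  refine ⟨t, ?_, ?_, rfl⟩
  · have hd : dist b c ^ 2 ≠ 0 := by positivity [dist_ne_zero.2 hbc]
    have h := o.dist_left_kiepertApex_sq t b c
    rw [hb] at h
    have h' : (t ^ 2 - 3 / 4) * dist b c ^ 2 = 0 := by linear_combination -h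
    linear_combination (mul_eq_zero.1 h').resolve_right hd
  · have hv : 0 < ‖c - b‖ ^ 2 := by positivity [sub_ne_zero.2 hbc.symm]
    have h := o.areaForm_mul_areaForm_neg_of_sOppSide hbc ha
    rw [areaForm_kiepertApex_sub_left] at h
    nlinarith

theorem areaForm_sub_sub_rotate (a b c : V) : ω (b - a) (c - a) = ω (c - b) (a - b) := by
  simp only [map_sub, LinearMap.sub_apply, areaForm_apply_self, o.areaForm_swap b a,
    o.areaForm_swap c a, o.areaForm_swap c b]
  ring

theorem areaForm_kiepertApex_sub_cyclic_sum_eq_zero (t : ℝ) (a b c x : V) :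
    ω (o.kiepertApex t b c - a) (x - a) + ω (o.kiepertApex t c a - b) (x - b) +
      ω (o.kiepertApex t a b - c) (x - c) = 0 := by
  simp only [kiepertApex, midpoint_eq_smul_add, invOf_eq_inv, map_add, map_sub, map_smul,
    LinearMap.add_apply, LinearMap.sub_apply, LinearMap.smul_apply, smul_eq_mul,
    areaForm_rightAngleRotation_left, areaForm_apply_self, o.areaForm_swap b a,
    o.areaForm_swap c a, o.areaForm_swap c b, real_inner_comm a b, real_inner_comm a c,
    real_inner_comm b c]
  ring

theorem areaForm_kiepertApex_sub_kiepertApex_sub (t : ℝ) (a b c : V) :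
    ω (o.kiepertApex t b c - a) (o.kiepertApex t c a - b) =
      (3 / 4 + t ^ 2) * ω (b - a) (c - a) -
        t / 2 * (‖b - a‖ ^ 2 + ‖c - b‖ ^ 2 + ‖a - c‖ ^ 2) := by
  simp only [kiepertApex, midpoint_eq_smul_add, invOf_eq_inv, ← real_inner_self_eq_norm_sq,
    map_add, map_sub, map_smul, LinearMap.add_apply, LinearMap.sub_apply, LinearMap.smul_apply,
    smul_eq_mul, inner_sub_left, inner_sub_right, inner_rightAngleRotation_left,
    areaForm_rightAngleRotation_left, areaForm_rightAngleRotation_right, areaForm_apply_self,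
    o.areaForm_swap b a, o.areaForm_swap c a, o.areaForm_swap c b, real_inner_comm a b,
    real_inner_comm a c, real_inner_comm b c]
  ring

theorem exists_mem_line_mem_line_of_areaForm_ne_zero {p q p' q' : V}
    (h : ω (q - p) (q' - p') ≠ 0) :
    ∃ x, x ∈ line[ℝ, p, q] ∧ x ∈ line[ℝ, p', q'] := by
  have hp' : p' ≠ q' := by
    rintro rfl
    simp at h
  have h' : ω (q' - p') (q - p) ≠ 0 := by rwa [areaForm_swap, neg_ne_zero]
  set s := ω (q' - p') (p' - p) / ω (q' - p') (q - p)
  refine ⟨s • (q - p) + p, smul_vsub_vadd_mem_affineSpan_pair s p q,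
    o.mem_line_of_areaForm_sub_eq_zero hp' ?_⟩
  rw [add_sub_assoc, map_add, map_smul, smul_eq_mul, div_mul_cancel₀ _ h', ← map_add,
    sub_add_sub_cancel', sub_self, map_zero]

theorem kiepert_lines_concurrent {a b c : V} {t : ℝ} (ht : t * ω (b - a) (c - a) < 0) :
    ∃ x, x ∈ line[ℝ, a, o.kiepertApex t b c] ∧ x ∈ line[ℝ, b, o.kiepertApex t c a] ∧
      x ∈ line[ℝ, c, o.kiepertApex t a b] := by
  have hcross : ω (o.kiepertApex t b c - a) (o.kiepertApex t c a - b) ≠ 0 := by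
    rw [areaForm_kiepertApex_sub_kiepertApex_sub]
    set Δ := ω (b - a) (c - a)
    set S := ‖b - a‖ ^ 2 + ‖c - b‖ ^ 2 + ‖a - c‖ ^ 2
    have hΔ : 0 < Δ ^ 2 := by positivity [right_ne_zero_of_mul ht.ne]
    have hS : 0 ≤ S := by positivity
    have key : 0 < ((3 / 4 + t ^ 2) * Δ - t / 2 * S) * Δ := by nlinarith [sq_nonneg t]
    exact left_ne_zero_of_mul key.ne'
  obtain ⟨x, hxa, hxb⟩ := o.exists_mem_line_mem_line_of_areaForm_ne_zero hcross
  have hc : c ≠ o.kiepertApex t a b := by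
    intro hc
    have h := o.areaForm_kiepertApex_sub_left t a b
    rw [← hc] at h
    rw [h] at ht
    nlinarith [sq_nonneg t, sq_nonneg ‖b - a‖]
  refine ⟨x, hxa, hxb, o.mem_line_of_areaForm_sub_eq_zero hc ?_⟩
  have h := o.areaForm_kiepertApex_sub_cyclic_sum_eq_zero t a b c x
  rw [o.areaForm_sub_eq_zero_of_mem_line hxa, o.areaForm_sub_eq_zero_of_mem_line hxb] at h
  linarith

end Orientation

theorem eq_of_sq_eq_sq_of_mul_neg {s t d : ℝ} (h : s ^ 2 = t ^ 2) (hs : s * d < 0)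
    (ht : t * d < 0) : s = t := by
  rcases sq_eq_sq_iff_eq_or_eq_neg.1 h with h | rfl
  · exact h
  · nlinarith

theorem napoleon_concurrent {V : Type*} [NormedAddCommGroup V] [InnerProductSpace ℝ V]
    [Fact (finrank ℝ V = 2)] {a b c a' b' c' : V} (habc : ¬ Collinear ℝ {a, b, c})
    (ha'₁ : dist b a' = dist b c) (ha'₂ : dist c a' = dist b c)
    (ha' : line[ℝ, b, c].SOppSide a a')
    (hb'₁ : dist c b' = dist c a) (hb'₂ : dist a b' = dist c a)
    (hb' : line[ℝ, c, a].SOppSide b b')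
    (hc'₁ : dist a c' = dist a b) (hc'₂ : dist b c' = dist a b)
    (hc' : line[ℝ, a, b].SOppSide c c') :
    ∃ x, x ∈ line[ℝ, a, a'] ∧ x ∈ line[ℝ, b, b'] ∧ x ∈ line[ℝ, c, c'] := by
  have : FiniteDimensional ℝ V := .of_fact_finrank_eq_two
  let o : Orientation ℝ V (Fin 2) := (finBasisOfFinrankEq ℝ V Fact.out).orientation
  obtain ⟨ta, hta, hta', rfl⟩ :=
    o.exists_eq_kiepertApex_of_sOppSide (ne₂₃_of_not_collinear habc) ha'₁ ha'₂ ha'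
  obtain ⟨tb, htb, htb', rfl⟩ :=
    o.exists_eq_kiepertApex_of_sOppSide (ne₁₃_of_not_collinear habc).symm hb'₁ hb'₂ hb'
  obtain ⟨tc, htc, htc', rfl⟩ :=
    o.exists_eq_kiepertApex_of_sOppSide (ne₁₂_of_not_collinear habc) hc'₁ hc'₂ hc'
  rw [← o.areaForm_sub_sub_rotate] at hta'
  rw [← o.areaForm_sub_sub_rotate, ← o.areaForm_sub_sub_rotate] at htb'
  obtain rfl := eq_of_sq_eq_sq_of_mul_neg (htb.trans hta.symm) htb' hta'
  obtain rfl := eq_of_sq_eq_sq_of_mul_neg (htc.trans hta.symm) htc' hta'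
  exact o.kiepert_lines_concurrent hta'

theorem napoleon_lines_concurrent_general
    (A B C A' B' C' : EuclideanSpace ℝ (Fin 2))
    (hncol : ¬ Collinear ℝ ({A, B, C} : Set (EuclideanSpace ℝ (Fin 2))))
    (hA'1 : dist B A' = dist B C) (hA'2 : dist C A' = dist B C)
    (hA'side : (affineSpan ℝ ({B, C} : Set (EuclideanSpace ℝ (Fin 2)))).SOppSide A A')
    (hB'1 : dist C B' = dist C A) (hB'2 : dist A B' = dist C A)
    (hB'side : (affineSpan ℝ ({C, A} : Set (EuclideanSpace ℝ (Fin 2)))).SOppSide B B')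
    (hC'1 : dist A C' = dist A B) (hC'2 : dist B C' = dist A B)
    (hC'side : (affineSpan ℝ ({A, B} : Set (EuclideanSpace ℝ (Fin 2)))).SOppSide C C') :
    ∃ X : EuclideanSpace ℝ (Fin 2),
      X ∈ affineSpan ℝ ({A, A'} : Set (EuclideanSpace ℝ (Fin 2))) ∧
      X ∈ affineSpan ℝ ({B, B'} : Set (EuclideanSpace ℝ (Fin 2))) ∧
      X ∈ affineSpan ℝ ({C, C'} : Set (EuclideanSpace ℝ (Fin 2))) := by
  have : Fact (finrank ℝ (EuclideanSpace ℝ (Fin 2)) = 2) := ⟨finrank_euclideanSpace_fin⟩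
  exact napoleon_concurrent hncol hA'1 hA'2 hA'side hB'1 hB'2 hB'side hC'1 hC'2 hC'side

theorem napoleon_lines_concurrent
    (A B C A' B' C' : EuclideanSpace ℝ (Fin 2))
    (hncol : ¬ Collinear ℝ ({A, B, C} : Set (EuclideanSpace ℝ (Fin 2))))
    (hA : ∠ B A C < 2 * Real.pi / 3)
    (hB : ∠ A B C < 2 * Real.pi / 3)
    (hC : ∠ B C A < 2 * Real.pi / 3)
    (hA'1 : dist B A' = dist B C) (hA'2 : dist C A' = dist B C)
    (hA'side : (affineSpan ℝ ({B, C} : Set (EuclideanSpace ℝ (Fin 2)))).SOppSide A A')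
    (hB'1 : dist C B' = dist C A) (hB'2 : dist A B' = dist C A)
    (hB'side : (affineSpan ℝ ({C, A} : Set (EuclideanSpace ℝ (Fin 2)))).SOppSide B B')
    (hC'1 : dist A C' = dist A B) (hC'2 : dist B C' = dist A B)
    (hC'side : (affineSpan ℝ ({A, B} : Set (EuclideanSpace ℝ (Fin 2)))).SOppSide C C') :
    ∃ X : EuclideanSpace ℝ (Fin 2),
      X ∈ affineSpan ℝ ({A, A'} : Set (EuclideanSpace ℝ (Fin 2))) ∧
      X ∈ affineSpan ℝ ({B, B'} : Set (EuclideanSpace ℝ (Fin 2))) ∧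
      X ∈ affineSpan ℝ ({C, C'} : Set (EuclideanSpace ℝ (Fin 2))) :=
  napoleon_lines_concurrent_general A B C A' B' C' hncol hA'1 hA'2 hA'side hB'1 hB'2 hB'side hC'1
    hC'2 hC'side
end

section
/- If F is the point minimizing the sum of distances to points p₁, …, pₙ (the Fermat–Weber point), and each point pᵢ is moved along the segment from pᵢ toward F to a new position pᵢ' (i.e., pᵢ' lies on segment [pᵢ, F]), then F still minimizes the sum of distances to p₁', …, pₙ', provided F is not equal to any pᵢ'. -/
/-!
Moving each `pᵢ` to a point `pᵢ'` between `pᵢ` and `F` lowers the cost of `F` by exactly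
`Σ dist pᵢ pᵢ'`, while by the triangle inequality it lowers the cost of any other point by at
most that much.
-/

open Finset

theorem sum_dist_le_of_dist_add_dist_eq {α ι : Type*} [PseudoMetricSpace α] (s : Finset ι)
    {p q : ι → α} {F : α} (hmin : ∀ x, ∑ i ∈ s, dist F (p i) ≤ ∑ i ∈ s, dist x (p i))
    (hbtw : ∀ i ∈ s, dist (p i) (q i) + dist (q i) F = dist (p i) F) (x : α) :
    ∑ i ∈ s, dist F (q i) ≤ ∑ i ∈ s, dist x (q i) := by
  have hF : ∑ i ∈ s, dist F (q i) = ∑ i ∈ s, dist F (p i) - ∑ i ∈ s, dist (q i) (p i) := by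
    rw [← sum_sub_distrib]
    refine sum_congr rfl fun i hi => ?_
    linarith [hbtw i hi, dist_comm F (q i), dist_comm F (p i), dist_comm (q i) (p i)]
  have hx : ∑ i ∈ s, dist x (p i) ≤ ∑ i ∈ s, dist x (q i) + ∑ i ∈ s, dist (q i) (p i) := by
    rw [← sum_add_distrib]
    exact sum_le_sum fun i _ => dist_triangle _ _ _
  linarith [hmin x]

theorem fermat_weber_invariant_under_contraction_general
    (n : ℕ)
    (p p' : Fin n → EuclideanSpace ℝ (Fin 2)) (F : EuclideanSpace ℝ (Fin 2))
    (hmin : ∀ x : EuclideanSpace ℝ (Fin 2),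
      ∑ i, dist F (p i) ≤ ∑ i, dist x (p i))
    (hseg : ∀ i, p' i ∈ segment ℝ (p i) F) :
    ∀ x : EuclideanSpace ℝ (Fin 2),
      ∑ i, dist F (p' i) ≤ ∑ i, dist x (p' i) :=
  sum_dist_le_of_dist_add_dist_eq univ hmin fun i _ => dist_add_dist_of_mem_segment (hseg i)

theorem fermat_weber_invariant_under_contraction
    (n : ℕ) (hn : 1 ≤ n)
    (p p' : Fin n → EuclideanSpace ℝ (Fin 2)) (F : EuclideanSpace ℝ (Fin 2))
    (hmin : ∀ x : EuclideanSpace ℝ (Fin 2),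
      ∑ i, dist F (p i) ≤ ∑ i, dist x (p i))
    (hseg : ∀ i, p' i ∈ segment ℝ (p i) F)
    (hne : ∀ i, p' i ≠ F) :
    ∀ x : EuclideanSpace ℝ (Fin 2),
      ∑ i, dist F (p' i) ≤ ∑ i, dist x (p' i) :=
  fermat_weber_invariant_under_contraction_general n p p' F hmin hseg
end
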